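/- arXiv:2204.11418 — 10 statements merged into one kernel-verified Lean document; each statement's English description precedes it below -/
import Mathlib

section
/- Let E be a real Hilbert space, f : E → ℝ twice continuously differentiable, and L₀, L₁, L₂ ≥ 0. Assume: (i) ‖∇f(x)‖ ≤ L₀ for all x ∈ E; (ii) the gradient map x ↦ ∇f(x) is L₁-Lipschitz; (iii) the Hessian map x ↦ D(∇f)(x) is L₂-Lipschitz from E into the continuous linear maps E → E equipped with the operator norm. Then the map x ↦ (D(∇f)(x))(∇f(x)) — which is the gradient of the Hamiltonian H(x) = (1/2)·‖∇f(x)‖² — is (L₀·L₂ + L₁²)-Lipschitz; consequently H has (L₀·L₂ + L₁²)-Lipschitz gradient. -/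
namespace ContinuousLinearMap

variable {𝕜 E F G : Type*} [NontriviallyNormedField 𝕜] [SeminormedAddCommGroup E]
  [SeminormedAddCommGroup F] [SeminormedAddCommGroup G] [NormedSpace 𝕜 F] [NormedSpace 𝕜 G]

theorem norm_apply_sub_apply_le (A : E → F →L[𝕜] G) (v : E → F) {M N K L : ℝ} {x y : E}
    (hv : ‖v x‖ ≤ M) (hA : ‖A y‖ ≤ N) (hvLip : ‖v x - v y‖ ≤ K * ‖x - y‖)
    (hALip : ‖A x - A y‖ ≤ L * ‖x - y‖) :
    ‖A x (v x) - A y (v y)‖ ≤ (M * L + N * K) * ‖x - y‖ := by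
  have hN : 0 ≤ N := (norm_nonneg _).trans hA
  have hL : 0 ≤ L * ‖x - y‖ := (norm_nonneg _).trans hALip
  calc ‖A x (v x) - A y (v y)‖
      = ‖(A x - A y) (v x) + A y (v x - v y)‖ := by simp only [sub_apply, map_sub, sub_add_sub_cancel]
    _ ≤ ‖A x - A y‖ * ‖v x‖ + ‖A y‖ * ‖v x - v y‖ :=
        (norm_add_le _ _).trans (add_le_add (le_opNorm _ _) (le_opNorm _ _))
    _ ≤ L * ‖x - y‖ * M + N * (K * ‖x - y‖) := by gcongr
    _ = (M * L + N * K) * ‖x - y‖ := by ring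

end ContinuousLinearMap

theorem hamiltonian_gradient_lipschitz_general
    {E : Type*} [NormedAddCommGroup E] [InnerProductSpace ℝ E] [CompleteSpace E]
    (f : E → ℝ) (L₀ L₁ L₂ : ℝ)
    (hL₁ : 0 ≤ L₁)
    (hbound : ∀ x : E, ‖gradient f x‖ ≤ L₀)
    (hgradLip : ∀ x y : E, ‖gradient f x - gradient f y‖ ≤ L₁ * ‖x - y‖)
    (hhessLip : ∀ x y : E,
      ‖fderiv ℝ (gradient f) x - fderiv ℝ (gradient f) y‖ ≤ L₂ * ‖x - y‖) :
    ∀ x y : E,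
      ‖fderiv ℝ (gradient f) x (gradient f x) - fderiv ℝ (gradient f) y (gradient f y)‖
        ≤ (L₀ * L₂ + L₁ ^ 2) * ‖x - y‖ := by
  intro x y
  have hHess : ‖fderiv ℝ (gradient f) y‖ ≤ L₁ :=
    norm_fderiv_le_of_lip' ℝ hL₁ (.of_forall fun z => hgradLip z y)
  calc _ ≤ (L₀ * L₂ + L₁ * L₁) * ‖x - y‖ :=
        ContinuousLinearMap.norm_apply_sub_apply_le _ _ (hbound x) hHess (hgradLip x y)
          (hhessLip x y)
    _ = (L₀ * L₂ + L₁ ^ 2) * ‖x - y‖ := by ring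

theorem hamiltonian_gradient_lipschitz
    {E : Type*} [NormedAddCommGroup E] [InnerProductSpace ℝ E] [CompleteSpace E]
    (f : E → ℝ) (hf : ContDiff ℝ 2 f) (L₀ L₁ L₂ : ℝ)
    (hL₀ : 0 ≤ L₀) (hL₁ : 0 ≤ L₁) (hL₂ : 0 ≤ L₂)
    (hbound : ∀ x : E, ‖gradient f x‖ ≤ L₀)
    (hgradLip : ∀ x y : E, ‖gradient f x - gradient f y‖ ≤ L₁ * ‖x - y‖)
    (hhessLip : ∀ x y : E,
      ‖fderiv ℝ (gradient f) x - fderiv ℝ (gradient f) y‖ ≤ L₂ * ‖x - y‖) :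
    ∀ x y : E,
      ‖fderiv ℝ (gradient f) x (gradient f x) - fderiv ℝ (gradient f) y (gradient f y)‖
        ≤ (L₀ * L₂ + L₁ ^ 2) * ‖x - y‖ :=
  hamiltonian_gradient_lipschitz_general f L₀ L₁ L₂ hL₁ hbound hgradLip hhessLip
end

section
/- Let E be a real Hilbert space, f : E → ℝ twice continuously differentiable, and define the Hamiltonian H(x) = (1/2)·‖∇f(x)‖². Suppose H is differentiable with L-Lipschitz gradient (L > 0), H satisfies the PL condition with constant δ > 0 (i.e., (1/2)·‖∇H(x)‖² ≥ δ·H(x) for all x), and δ ≤ L. Fix line-search parameters r₁, ϱ ∈ (0,1) and an initial stepsize η̄ > 0. Let (p_t) ⊆ E and positive stepsizes (η_t) satisfy p_{t+1} = p_t − η_t·∇H(p_t) together with, for every t: (a) the Armijo sufficient-decrease condition H(p_t) − H(p_{t+1}) ≥ r₁·η_t·‖∇H(p_t)‖², and (b) the backtracking lower bound η_t ≥ min{η̄, 2ϱ(1−r₁)/L}. Then for every t ∈ ℕ, ‖∇f(p_t)‖² ≤ (1 − 2·min{η̄·r₁, 2ϱ(1−r₁)r₁/L}·δ)^t · ‖∇f(p_0)‖².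 -/
/-!
Armijo's condition together with the PL inequality `‖∇H‖² ≥ 2δH` gives the per-step contraction
`H(p_{t+1}) ≤ (1 - 2 r₁ η_t δ) H(p_t)`, and the backtracking bound on `η_t` makes the factor uniform
in `t`. The contraction factor is nonnegative because `δ ≤ L`, `ϱ ≤ 1` and `4 r₁ (1 - r₁) ≤ 1`,
so iterating it bounds `H(p_t) = ½‖∇f(p_t)‖²` geometrically.
-/

theorem le_one_sub_two_mul_mul_of_armijo_of_pl {h h' g δ m s : ℝ} (hh : 0 ≤ h) (hδ : 0 ≤ δ)
    (hms : m ≤ s) (hs : 0 ≤ s) (hPL : δ * h ≤ 1 / 2 * g) (harmijo : s * g ≤ h - h') :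
    h' ≤ (1 - 2 * m * δ) * h := by
  have hg : 2 * δ * h ≤ g := by linarith
  have hdecrease : m * (2 * δ * h) ≤ h - h' :=
    calc m * (2 * δ * h) ≤ s * (2 * δ * h) := by gcongr
      _ ≤ s * g := by gcongr
      _ ≤ h - h' := harmijo
  linarith

theorem two_mul_mul_le_one_of_le_div {m δ L ϱ r : ℝ} (hL : 0 < L) (hδ : 0 ≤ δ) (hδL : δ ≤ L)
    (hϱ₁ : ϱ ≤ 1) (hr₀ : 0 ≤ r) (hr₁ : r ≤ 1)
    (hm : m ≤ 2 * ϱ * (1 - r) * r / L) :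
    2 * m * δ ≤ 1 := by
  have hδL' : δ / L ≤ 1 := (div_le_one hL).mpr hδL
  have hr : 0 ≤ (1 - r) * r := mul_nonneg (by linarith) hr₀
  calc 2 * m * δ ≤ 2 * (2 * ϱ * (1 - r) * r / L) * δ := by gcongr
    _ = 4 * ϱ * ((1 - r) * r) * (δ / L) := by ring
    _ ≤ 4 * 1 * ((1 - r) * r) * 1 := by gcongr
    _ ≤ 1 := by nlinarith [sq_nonneg (1 - 2 * r)]

theorem hamiltonian_descent_linesearch_linear_convergence_general
    {E : Type*} [NormedAddCommGroup E] [InnerProductSpace ℝ E] [CompleteSpace E]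
    (f : E → ℝ)
    (H : E → ℝ) (hH : H = fun x => (1 / 2 : ℝ) * ‖gradient f x‖ ^ 2)
    (L δ : ℝ) (hL : 0 < L) (hδ : 0 < δ) (hδL : δ ≤ L)
    (hPL : ∀ x : E, δ * H x ≤ (1 / 2 : ℝ) * ‖gradient H x‖ ^ 2)
    (r₁ ϱ : ℝ) (hr₁ : r₁ ∈ Set.Ioo (0 : ℝ) 1) (hϱ : ϱ ∈ Set.Ioo (0 : ℝ) 1)
    (ηbar : ℝ)
    (p : ℕ → E) (η : ℕ → ℝ) (hηpos : ∀ t : ℕ, 0 < η t)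
    (harmijo : ∀ t : ℕ, r₁ * η t * ‖gradient H (p t)‖ ^ 2 ≤ H (p t) - H (p (t + 1)))
    (hback : ∀ t : ℕ, min ηbar (2 * ϱ * (1 - r₁) / L) ≤ η t) :
    ∀ t : ℕ, ‖gradient f (p t)‖ ^ 2
      ≤ (1 - 2 * min (ηbar * r₁) (2 * ϱ * (1 - r₁) * r₁ / L) * δ) ^ t
          * ‖gradient f (p 0)‖ ^ 2 := by
  obtain ⟨hr₀, hr₁⟩ := hr₁
  obtain ⟨-, hϱ₁⟩ := hϱ
  set m := min (ηbar * r₁) (2 * ϱ * (1 - r₁) * r₁ / L)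
  have hH_nonneg : ∀ x, 0 ≤ H x := fun x => by rw [hH]; positivity
  have hm_le : ∀ t, m ≤ r₁ * η t := fun t => by
    have hm : m = r₁ * min ηbar (2 * ϱ * (1 - r₁) / L) := by
      rw [mul_min_of_nonneg _ _ hr₀.le]; unfold m; congr 1 <;> ring
    rw [hm]; gcongr; exact hback t
  have hfactor : 0 ≤ 1 - 2 * m * δ := by
    have := two_mul_mul_le_one_of_le_div hL hδ.le hδL hϱ₁.le hr₀.le hr₁.le
      (min_le_right (ηbar * r₁) _)
    linarith
  have hstep : ∀ t, H (p (t + 1)) ≤ (1 - 2 * m * δ) * H (p t) := fun t =>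
    le_one_sub_two_mul_mul_of_armijo_of_pl (hH_nonneg _) hδ.le (hm_le t)
      (mul_nonneg hr₀.le (hηpos t).le) (hPL _) (harmijo t)
  intro t
  have hgeom := le_geom (u := fun t => H (p t)) hfactor t fun k _ => hstep k
  simp only [hH] at hgeom
  linarith

theorem hamiltonian_descent_linesearch_linear_convergence
    {E : Type*} [NormedAddCommGroup E] [InnerProductSpace ℝ E] [CompleteSpace E]
    (f : E → ℝ) (hf : ContDiff ℝ 2 f)
    (H : E → ℝ) (hH : H = fun x => (1 / 2 : ℝ) * ‖gradient f x‖ ^ 2)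
    (L δ : ℝ) (hL : 0 < L) (hδ : 0 < δ) (hδL : δ ≤ L)
    (hdiff : ∀ x : E, DifferentiableAt ℝ H x)
    (hLip : ∀ x y : E, ‖gradient H x - gradient H y‖ ≤ L * ‖x - y‖)
    (hPL : ∀ x : E, δ * H x ≤ (1 / 2 : ℝ) * ‖gradient H x‖ ^ 2)
    (r₁ ϱ : ℝ) (hr₁ : r₁ ∈ Set.Ioo (0 : ℝ) 1) (hϱ : ϱ ∈ Set.Ioo (0 : ℝ) 1)
    (ηbar : ℝ) (hηbar : 0 < ηbar)
    (p : ℕ → E) (η : ℕ → ℝ) (hηpos : ∀ t : ℕ, 0 < η t)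
    (hp : ∀ t : ℕ, p (t + 1) = p t - η t • gradient H (p t))
    (harmijo : ∀ t : ℕ, r₁ * η t * ‖gradient H (p t)‖ ^ 2 ≤ H (p t) - H (p (t + 1)))
    (hback : ∀ t : ℕ, min ηbar (2 * ϱ * (1 - r₁) / L) ≤ η t) :
    ∀ t : ℕ, ‖gradient f (p t)‖ ^ 2
      ≤ (1 - 2 * min (ηbar * r₁) (2 * ϱ * (1 - r₁) * r₁ / L) * δ) ^ t
          * ‖gradient f (p 0)‖ ^ 2 :=
  hamiltonian_descent_linesearch_linear_convergence_general f H hH L δ hL hδ hδL hPL r₁ ϱ hr₁ hϱ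
    ηbar p η hηpos harmijo hback
end

section
/- Let E and F be finite-dimensional real inner product spaces and μ > 0. Let A : E → E and C : F → F be symmetric linear maps such that ⟨A u, u⟩ ≥ μ·‖u‖² for all u ∈ E and ⟨C v, v⟩ ≤ −μ·‖v‖² for all v ∈ F, and let B : E → F be an arbitrary linear map with adjoint B* : F → E. If λ ∈ ℝ, u ∈ E, v ∈ F with (u, v) ≠ (0, 0) satisfy the eigenvalue equations A u + B* v = λ·u and B u + C v = λ·v, then |λ| ≥ μ. -/
/-! Pair the first eigenvalue equation with `u` and the second with `v`: the cross terms `⟪B u, v⟫`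
coincide, so subtracting gives `⟪A u, u⟫ - ⟪C v, v⟫ = λ (‖u‖² - ‖v‖²)`. Strong convexity bounds the
left side below by `μ (‖u‖² + ‖v‖²)`, while the right side is at most `|λ| (‖u‖² + ‖v‖²)`. -/

open scoped InnerProductSpace

theorem le_abs_of_mul_add_le_mul_sub {μ lam a b : ℝ} (ha : 0 ≤ a) (hb : 0 ≤ b) (hab : 0 < a + b)
    (h : μ * (a + b) ≤ lam * (a - b)) : μ ≤ |lam| := by
  have hdiff : |a - b| ≤ a + b := abs_sub_le_iff.mpr ⟨by linarith, by linarith⟩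
  refine le_of_mul_le_mul_right ?_ hab
  calc μ * (a + b) ≤ lam * (a - b) := h
    _ ≤ |lam| * |a - b| := abs_mul lam (a - b) ▸ le_abs_self _
    _ ≤ |lam| * (a + b) := mul_le_mul_of_nonneg_left hdiff (abs_nonneg lam)

section BlockEigenvector

variable {E F : Type*}
    [NormedAddCommGroup E] [InnerProductSpace ℝ E] [FiniteDimensional ℝ E]
    [NormedAddCommGroup F] [InnerProductSpace ℝ F] [FiniteDimensional ℝ F]

theorem inner_self_sub_inner_self_of_block_eigen (A : E →ₗ[ℝ] E) (C : F →ₗ[ℝ] F) (B : E →ₗ[ℝ] F)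
    {lam : ℝ} {u : E} {v : F}
    (h1 : A u + LinearMap.adjoint B v = lam • u) (h2 : B u + C v = lam • v) :
    ⟪A u, u⟫_ℝ - ⟪C v, v⟫_ℝ = lam * (‖u‖ ^ 2 - ‖v‖ ^ 2) := by
  have hu : ⟪A u, u⟫_ℝ + ⟪B u, v⟫_ℝ = lam * ‖u‖ ^ 2 := by
    rw [← real_inner_self_eq_norm_sq, ← real_inner_smul_left, ← h1, inner_add_left,
      LinearMap.adjoint_inner_left, real_inner_comm (B u) v]
  have hv : ⟪B u, v⟫_ℝ + ⟪C v, v⟫_ℝ = lam * ‖v‖ ^ 2 := by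
    rw [← real_inner_self_eq_norm_sq, ← real_inner_smul_left, ← h2, inner_add_left]
  linarith

end BlockEigenvector

theorem strongly_convex_concave_hessian_eigenvalue_bound_general
    {E F : Type*}
    [NormedAddCommGroup E] [InnerProductSpace ℝ E] [FiniteDimensional ℝ E]
    [NormedAddCommGroup F] [InnerProductSpace ℝ F] [FiniteDimensional ℝ F]
    (μ : ℝ)
    (A : E →ₗ[ℝ] E) (C : F →ₗ[ℝ] F) (B : E →ₗ[ℝ] F)
    (hAμ : ∀ u : E, μ * ‖u‖ ^ 2 ≤ ⟪A u, u⟫_ℝ)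
    (hCμ : ∀ v : F, ⟪C v, v⟫_ℝ ≤ -μ * ‖v‖ ^ 2)
    (lam : ℝ) (u : E) (v : F) (huv : (u, v) ≠ (0, 0))
    (h1 : A u + LinearMap.adjoint B v = lam • u)
    (h2 : B u + C v = lam • v) :
    μ ≤ |lam| := by
  have hpos : 0 < ‖u‖ ^ 2 + ‖v‖ ^ 2 := by
    obtain hu | hv : u ≠ 0 ∨ v ≠ 0 := by
      rw [← not_and_or]; simpa [Prod.ext_iff] using huv
    · exact add_pos_of_pos_of_nonneg (by positivity) (by positivity)
    · exact add_pos_of_nonneg_of_pos (by positivity) (by positivity)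
  have hdiff := inner_self_sub_inner_self_of_block_eigen A C B h1 h2
  refine le_abs_of_mul_add_le_mul_sub (by positivity) (by positivity) hpos ?_
  linarith [hAμ u, hCμ v]

theorem strongly_convex_concave_hessian_eigenvalue_bound
    {E F : Type*}
    [NormedAddCommGroup E] [InnerProductSpace ℝ E] [FiniteDimensional ℝ E]
    [NormedAddCommGroup F] [InnerProductSpace ℝ F] [FiniteDimensional ℝ F]
    (μ : ℝ) (hμ : 0 < μ)
    (A : E →ₗ[ℝ] E) (C : F →ₗ[ℝ] F) (B : E →ₗ[ℝ] F)
    (hA : A.IsSymmetric) (hC : C.IsSymmetric)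
    (hAμ : ∀ u : E, μ * ‖u‖ ^ 2 ≤ ⟪A u, u⟫_ℝ)
    (hCμ : ∀ v : F, ⟪C v, v⟫_ℝ ≤ -μ * ‖v‖ ^ 2)
    (lam : ℝ) (u : E) (v : F) (huv : (u, v) ≠ (0, 0))
    (h1 : A u + LinearMap.adjoint B v = lam • u)
    (h2 : B u + C v = lam • v) :
    μ ≤ |lam| :=
  strongly_convex_concave_hessian_eigenvalue_bound_general μ A C B hAμ hCμ lam u v huv h1 h2
end

section
/- Let E and F be finite-dimensional real inner product spaces, τ > 0 and L ≥ 0. Let A : E → E be a symmetric linear map with ‖A u‖ ≤ L·‖u‖ for all u ∈ E, and let B : E → F be a linear map (with adjoint B* : F → E) satisfying ‖B u‖ ≥ τ·‖u‖ for all u ∈ E and ‖B* v‖ ≥ τ·‖v‖ for all v ∈ F. Then for every u ∈ E and v ∈ F, ‖A u + B* v‖² + ‖B u‖² ≥ (τ⁴ / (2τ² + L²)) · (‖u‖² + ‖v‖²). -/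
/-!
Write `a = ‖u‖`, `w = ‖v‖`, `x = ‖A u + B* v‖`, `b = ‖B u‖`. The hypotheses give `τ a ≤ b` and,
since `B* v = (A u + B* v) - A u`, also `τ w ≤ x + L a`. Cauchy–Schwarz in `ℝ²` turns the second
into `τ⁴ w² ≤ (τ² + L²)(x² + τ² a²) ≤ (τ² + L²)(x² + b²)`, and adding `τ⁴ a² ≤ τ² b²` gives
`τ⁴ (a² + w²) ≤ (2τ² + L²)(x² + b²)`.
-/

lemma sq_mul_add_mul_le (τ L x a : ℝ) :
    τ ^ 2 * (x + L * a) ^ 2 ≤ (τ ^ 2 + L ^ 2) * (x ^ 2 + τ ^ 2 * a ^ 2) := by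
  have key : (τ ^ 2 + L ^ 2) * (x ^ 2 + τ ^ 2 * a ^ 2) - τ ^ 2 * (x + L * a) ^ 2
      = (L * x - τ ^ 2 * a) ^ 2 := by ring
  exact sub_nonneg.mp (key ▸ sq_nonneg _)

lemma pow_four_mul_add_sq_le {τ L a w x b : ℝ} (hτ : 0 ≤ τ) (ha : 0 ≤ a) (hw : 0 ≤ w)
    (hab : τ * a ≤ b) (hwx : τ * w ≤ x + L * a) :
    τ ^ 4 * (a ^ 2 + w ^ 2) ≤ (2 * τ ^ 2 + L ^ 2) * (x ^ 2 + b ^ 2) := by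
  have hab_sq : τ ^ 2 * a ^ 2 ≤ b ^ 2 := by
    simpa only [mul_pow] using pow_le_pow_left₀ (mul_nonneg hτ ha) hab 2
  have hwx_sq : τ ^ 2 * w ^ 2 ≤ (x + L * a) ^ 2 := by
    simpa only [mul_pow] using pow_le_pow_left₀ (mul_nonneg hτ hw) hwx 2
  have hw_bound : τ ^ 4 * w ^ 2 ≤ (τ ^ 2 + L ^ 2) * (x ^ 2 + b ^ 2) :=
    calc τ ^ 4 * w ^ 2 = τ ^ 2 * (τ ^ 2 * w ^ 2) := by ring
      _ ≤ τ ^ 2 * (x + L * a) ^ 2 := by gcongr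
      _ ≤ (τ ^ 2 + L ^ 2) * (x ^ 2 + τ ^ 2 * a ^ 2) := sq_mul_add_mul_le τ L x a
      _ ≤ (τ ^ 2 + L ^ 2) * (x ^ 2 + b ^ 2) := by gcongr
  have ha_bound : τ ^ 4 * a ^ 2 ≤ τ ^ 2 * (x ^ 2 + b ^ 2) :=
    calc τ ^ 4 * a ^ 2 = τ ^ 2 * (τ ^ 2 * a ^ 2) := by ring
      _ ≤ τ ^ 2 * (x ^ 2 + b ^ 2) := by
        gcongr; exact hab_sq.trans (le_add_of_nonneg_left (sq_nonneg x))
  linarith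

theorem smooth_geodesic_linear_norm_lower_bound_general
    {E F : Type*}
    [NormedAddCommGroup E] [InnerProductSpace ℝ E] [FiniteDimensional ℝ E]
    [NormedAddCommGroup F] [InnerProductSpace ℝ F] [FiniteDimensional ℝ F]
    (τ L : ℝ) (hτ : 0 < τ)
    (A : E →ₗ[ℝ] E)
    (hAL : ∀ u : E, ‖A u‖ ≤ L * ‖u‖)
    (B : E →ₗ[ℝ] F)
    (hB : ∀ u : E, τ * ‖u‖ ≤ ‖B u‖)
    (hB' : ∀ v : F, τ * ‖v‖ ≤ ‖LinearMap.adjoint B v‖)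
    (u : E) (v : F) :
    τ ^ 4 / (2 * τ ^ 2 + L ^ 2) * (‖u‖ ^ 2 + ‖v‖ ^ 2)
      ≤ ‖A u + LinearMap.adjoint B v‖ ^ 2 + ‖B u‖ ^ 2 := by
  have hv : τ * ‖v‖ ≤ ‖A u + LinearMap.adjoint B v‖ + L * ‖u‖ :=
    calc τ * ‖v‖ ≤ ‖LinearMap.adjoint B v‖ := hB' v
      _ ≤ ‖A u + LinearMap.adjoint B v‖ + ‖A u‖ := norm_le_add_norm_add' _ _
      _ ≤ ‖A u + LinearMap.adjoint B v‖ + L * ‖u‖ := by gcongr; exact hAL u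
  rw [div_mul_eq_mul_div, div_le_iff₀ (by positivity), mul_comm _ (2 * τ ^ 2 + L ^ 2)]
  exact pow_four_mul_add_sq_le hτ.le (norm_nonneg u) (norm_nonneg v) (hB u) hv

theorem smooth_geodesic_linear_norm_lower_bound
    {E F : Type*}
    [NormedAddCommGroup E] [InnerProductSpace ℝ E] [FiniteDimensional ℝ E]
    [NormedAddCommGroup F] [InnerProductSpace ℝ F] [FiniteDimensional ℝ F]
    (τ L : ℝ) (hτ : 0 < τ) (hL : 0 ≤ L)
    (A : E →ₗ[ℝ] E) (hA : A.IsSymmetric)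
    (hAL : ∀ u : E, ‖A u‖ ≤ L * ‖u‖)
    (B : E →ₗ[ℝ] F)
    (hB : ∀ u : E, τ * ‖u‖ ≤ ‖B u‖)
    (hB' : ∀ v : F, τ * ‖v‖ ≤ ‖LinearMap.adjoint B v‖)
    (u : E) (v : F) :
    τ ^ 4 / (2 * τ ^ 2 + L ^ 2) * (‖u‖ ^ 2 + ‖v‖ ^ 2)
      ≤ ‖A u + LinearMap.adjoint B v‖ ^ 2 + ‖B u‖ ^ 2 :=
  smooth_geodesic_linear_norm_lower_bound_general τ L hτ A hAL B hB hB' u v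
end

section
/- Let E and F be finite-dimensional real inner product spaces, τ > 0 and L ≥ 0. Let A : E → E be a symmetric linear map with ‖A u‖ ≤ L·‖u‖ for all u ∈ E, and let B : E → F be a linear map (with adjoint B* : F → E) satisfying ‖B u‖ ≥ τ·‖u‖ for all u ∈ E and ‖B* v‖ ≥ τ·‖v‖ for all v ∈ F. Consider the block operator T : E × F → E × F, T(u, v) = (A u + B* v, B u). Then every eigenvalue of T is bounded away from zero: if λ ∈ ℝ, u ∈ E, v ∈ F with (u, v) ≠ (0, 0) satisfy A u + B* v = λ·u and B u = λ·v, then λ² ≥ τ⁴ / (2τ² + L²). -/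
open RealInnerProductSpace

theorem smooth_geodesic_linear_eigenvalue_bound
    {E F : Type*}
    [NormedAddCommGroup E] [InnerProductSpace ℝ E] [FiniteDimensional ℝ E]
    [NormedAddCommGroup F] [InnerProductSpace ℝ F] [FiniteDimensional ℝ F]
    (τ L : ℝ) (hτ : 0 < τ) (hL : 0 ≤ L)
    (A : E →ₗ[ℝ] E) (hA : A.IsSymmetric)
    (hAL : ∀ u : E, ‖A u‖ ≤ L * ‖u‖)
    (B : E →ₗ[ℝ] F)
    (hB : ∀ u : E, τ * ‖u‖ ≤ ‖B u‖)
    (hB' : ∀ v : F, τ * ‖v‖ ≤ ‖LinearMap.adjoint B v‖)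
    (lam : ℝ) (u : E) (v : F) (huv : (u, v) ≠ (0, 0))
    (h1 : A u + LinearMap.adjoint B v = lam • u)
    (h2 : B u = lam • v) :
    τ ^ 4 / (2 * τ ^ 2 + L ^ 2) ≤ lam ^ 2 := by
  -- pairing h1 with u
  have key1 : ⟪(LinearMap.adjoint B) v, u⟫ = lam * ‖v‖ ^ 2 := by
    rw [LinearMap.adjoint_inner_left, h2, real_inner_smul_right,
      real_inner_self_eq_norm_sq]
  have key2 : ⟪A u, u⟫ = lam * ‖u‖ ^ 2 - lam * ‖v‖ ^ 2 := by
    have h := congrArg (fun x => ⟪x, u⟫) h1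
    simp only [inner_add_left, real_inner_smul_left,
      real_inner_self_eq_norm_sq] at h
    linarith [key1]
  -- τ‖u‖ ≤ |λ|‖v‖
  have hBu : ‖B u‖ = |lam| * ‖v‖ := by rw [h2, norm_smul, Real.norm_eq_abs]
  have f1 : τ * ‖u‖ ≤ |lam| * ‖v‖ := hBu ▸ hB u
  have g1 : τ ^ 2 * ‖u‖ ^ 2 ≤ lam ^ 2 * ‖v‖ ^ 2 := by
    have := mul_self_le_mul_self (by positivity) f1
    nlinarith [sq_abs lam]
  -- v ≠ 0
  have hv : 0 < ‖v‖ := by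
    rcases (norm_nonneg v).lt_or_eq with h | h
    · exact h
    · exfalso
      have hv0 : v = 0 := by rwa [eq_comm, norm_eq_zero] at h
      have hu0 : u = 0 := by
        have : τ * ‖u‖ ≤ 0 := by
          simpa [hv0] using f1
        have := norm_nonneg u
        have : ‖u‖ = 0 := by nlinarith
        rwa [norm_eq_zero] at this
      exact huv (by simp [hu0, hv0])
  -- B* v = λu − Au, so τ‖v‖ ≤ ‖λu − Au‖
  have hBv : (LinearMap.adjoint B) v = lam • u - A u := by
    rw [eq_sub_iff_add_eq, add_comm]; exact h1
  have f2 : (τ * ‖v‖) ^ 2 ≤ ‖lam • u - A u‖ ^ 2 := by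
    have h := hB' v
    rw [hBv] at h
    have := mul_self_le_mul_self (by positivity) h
    nlinarith
  have hexp : ‖lam • u - A u‖ ^ 2
      = lam ^ 2 * ‖u‖ ^ 2 - 2 * lam * ⟪A u, u⟫ + ‖A u‖ ^ 2 := by
    rw [norm_sub_sq_real, real_inner_smul_left, norm_smul, Real.norm_eq_abs,
      real_inner_comm u (A u)]
    nlinarith [sq_abs lam]
  have hd : ‖A u‖ ^ 2 ≤ L ^ 2 * ‖u‖ ^ 2 := by
    have := mul_self_le_mul_self (norm_nonneg (A u)) (hAL u)
    nlinarith
  rw [hexp, key2] at f2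
  have g2 : τ ^ 2 * ‖v‖ ^ 2
      ≤ 2 * lam ^ 2 * ‖v‖ ^ 2 - lam ^ 2 * ‖u‖ ^ 2 + L ^ 2 * ‖u‖ ^ 2 := by
    nlinarith [f2, hd]
  have p1 := mul_le_mul_of_nonneg_left g2 (sq_nonneg τ)
  have p2 := mul_le_mul_of_nonneg_left g1 (sq_nonneg L)
  have p3 : (0:ℝ) ≤ τ ^ 2 * (lam ^ 2 * ‖u‖ ^ 2) := by positivity
  have g3 : τ ^ 4 * ‖v‖ ^ 2 ≤ (lam ^ 2 * (2 * τ ^ 2 + L ^ 2)) * ‖v‖ ^ 2 := by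
    linarith [p1, p2, p3]
  have hb2 : (0:ℝ) < ‖v‖ ^ 2 := by positivity
  have hD : 0 < 2 * τ ^ 2 + L ^ 2 := by positivity
  rw [div_le_iff₀ hD]
  exact (mul_le_mul_iff_of_pos_right hb2).mp g3
end

section
/- Let E and F be finite-dimensional real inner product spaces. Let A : E → E and C : F → F be symmetric linear maps and B : E → F a linear map with adjoint B* : F → E. Suppose there are constants τ, μ, ρ ≥ 0 and Υ, Lₓ, L_y ≥ 0 such that: τ·‖u‖ ≤ ‖B u‖ ≤ Υ·‖u‖ and μ·‖u‖ ≤ ‖A u‖ ≤ Lₓ·‖u‖ for all u ∈ E, and τ·‖v‖ ≤ ‖B* v‖ ≤ Υ·‖v‖ and ρ·‖v‖ ≤ ‖C v‖ ≤ L_y·‖v‖ for all v ∈ F. Define a = 2τ² + μ² + ρ² and b = (τ² + μ²)(τ² + ρ²) − Υ²·(Lₓ + L_y)², and assume b > 0. Then every eigenvalue of the block operator T(u, v) = (A u + B* v, B u + C v) satisfies λ² ≥ b/a: if λ ∈ ℝ, u ∈ E, v ∈ F with (u, v) ≠ (0, 0) satisfy A u + B* v = λ·u and B u + C v = λ·v,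 then λ² ≥ b/a. -/
set_option maxHeartbeats 1600000 in
theorem sufficiently_bilinear_eigenvalue_bound
    {E F : Type*}
    [NormedAddCommGroup E] [InnerProductSpace ℝ E] [FiniteDimensional ℝ E]
    [NormedAddCommGroup F] [InnerProductSpace ℝ F] [FiniteDimensional ℝ F]
    (A : E →ₗ[ℝ] E) (C : F →ₗ[ℝ] F) (B : E →ₗ[ℝ] F)
    (hA : A.IsSymmetric) (hC : C.IsSymmetric)
    (τ μ ρ Υ Lx Ly : ℝ)
    (hτ : 0 ≤ τ) (hμ : 0 ≤ μ) (hρ : 0 ≤ ρ)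
    (hΥ : 0 ≤ Υ) (hLx : 0 ≤ Lx) (hLy : 0 ≤ Ly)
    (hBlow : ∀ u : E, τ * ‖u‖ ≤ ‖B u‖) (hBup : ∀ u : E, ‖B u‖ ≤ Υ * ‖u‖)
    (hAlow : ∀ u : E, μ * ‖u‖ ≤ ‖A u‖) (hAup : ∀ u : E, ‖A u‖ ≤ Lx * ‖u‖)
    (hBadjlow : ∀ v : F, τ * ‖v‖ ≤ ‖LinearMap.adjoint B v‖)
    (hBadjup : ∀ v : F, ‖LinearMap.adjoint B v‖ ≤ Υ * ‖v‖)
    (hClow : ∀ v : F, ρ * ‖v‖ ≤ ‖C v‖) (hCup : ∀ v : F, ‖C v‖ ≤ Ly * ‖v‖)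
    (a b : ℝ)
    (ha : a = 2 * τ ^ 2 + μ ^ 2 + ρ ^ 2)
    (hb : b = (τ ^ 2 + μ ^ 2) * (τ ^ 2 + ρ ^ 2) - Υ ^ 2 * (Lx + Ly) ^ 2)
    (hbpos : 0 < b)
    (lam : ℝ) (u : E) (v : F) (huv : (u, v) ≠ (0, 0))
    (h1 : A u + LinearMap.adjoint B v = lam • u)
    (h2 : B u + C v = lam • v) :
    b / a ≤ lam ^ 2 := by
  have hx : (0:ℝ) ≤ ‖u‖ := norm_nonneg u
  have hy : (0:ℝ) ≤ ‖v‖ := norm_nonneg v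
  -- squared eigen-equations
  have e1 : ‖A u‖ ^ 2 + 2 * (inner ℝ (A u) (LinearMap.adjoint B v) : ℝ)
      + ‖LinearMap.adjoint B v‖ ^ 2 = lam ^ 2 * ‖u‖ ^ 2 := by
    have h := congrArg (fun w : E => ‖w‖ ^ 2) h1
    simp only [norm_smul, Real.norm_eq_abs, mul_pow, sq_abs] at h
    rw [← h, norm_add_sq_real]
  have e2 : ‖B u‖ ^ 2 + 2 * (inner ℝ (B u) (C v) : ℝ)
      + ‖C v‖ ^ 2 = lam ^ 2 * ‖v‖ ^ 2 := by
    have h := congrArg (fun w : F => ‖w‖ ^ 2) h2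
    simp only [norm_smul, Real.norm_eq_abs, mul_pow, sq_abs] at h
    rw [← h, norm_add_sq_real]
  -- cross terms
  have csum : (inner ℝ (A u) (LinearMap.adjoint B v) : ℝ) + (inner ℝ (B u) (C v) : ℝ)
      = (inner ℝ (B (A u) + C (B u)) v : ℝ) := by
    rw [inner_add_left, LinearMap.adjoint_inner_right]
    congr 1
    exact (hC (B u) v).symm
  have cbound : |(inner ℝ (B (A u) + C (B u)) v : ℝ)| ≤ (Υ * (Lx + Ly)) * (‖u‖ * ‖v‖) := by
    have h0 : |(inner ℝ (B (A u) + C (B u)) v : ℝ)| ≤ ‖B (A u) + C (B u)‖ * ‖v‖ :=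
      abs_real_inner_le_norm _ _
    have h1' : ‖B (A u) + C (B u)‖ ≤ Υ * Lx * ‖u‖ + Ly * Υ * ‖u‖ := by
      have t1 : ‖B (A u)‖ ≤ Υ * (Lx * ‖u‖) :=
        (hBup (A u)).trans (mul_le_mul_of_nonneg_left (hAup u) hΥ)
      have t2 : ‖C (B u)‖ ≤ Ly * (Υ * ‖u‖) :=
        (hCup (B u)).trans (mul_le_mul_of_nonneg_left (hBup u) hLy)
      calc ‖B (A u) + C (B u)‖ ≤ ‖B (A u)‖ + ‖C (B u)‖ := norm_add_le _ _
        _ ≤ Υ * Lx * ‖u‖ + Ly * Υ * ‖u‖ := by nlinarith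
    nlinarith [mul_le_mul_of_nonneg_right h1' hy]
  have clow : -( (Υ * (Lx + Ly)) * (‖u‖ * ‖v‖)) ≤ (inner ℝ (B (A u) + C (B u)) v : ℝ) :=
    le_trans (neg_le_neg cbound) (neg_abs_le _)
  -- lower bounds on squares
  have sA : μ ^ 2 * ‖u‖ ^ 2 ≤ ‖A u‖ ^ 2 := by
    nlinarith [hAlow u, mul_nonneg hμ hx, norm_nonneg (A u)]
  have sB : τ ^ 2 * ‖u‖ ^ 2 ≤ ‖B u‖ ^ 2 := by
    nlinarith [hBlow u, mul_nonneg hτ hx, norm_nonneg (B u)]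
  have sBs : τ ^ 2 * ‖v‖ ^ 2 ≤ ‖LinearMap.adjoint B v‖ ^ 2 := by
    nlinarith [hBadjlow v, mul_nonneg hτ hy, norm_nonneg (LinearMap.adjoint B v)]
  have sC : ρ ^ 2 * ‖v‖ ^ 2 ≤ ‖C v‖ ^ 2 := by
    nlinarith [hClow v, mul_nonneg hρ hy, norm_nonneg (C v)]
  -- key inequality
  have key : (τ ^ 2 + μ ^ 2) * ‖u‖ ^ 2 + (τ ^ 2 + ρ ^ 2) * ‖v‖ ^ 2
      - 2 * (Υ * (Lx + Ly)) * (‖u‖ * ‖v‖) ≤ lam ^ 2 * (‖u‖ ^ 2 + ‖v‖ ^ 2) := by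
    linarith [e1, e2, csum, clow, sA, sB, sBs, sC]
  -- algebraic step:  a * Q ≥ b * (x² + y²)
  have step2 : b * (‖u‖ ^ 2 + ‖v‖ ^ 2) ≤
      a * ((τ ^ 2 + μ ^ 2) * ‖u‖ ^ 2 + (τ ^ 2 + ρ ^ 2) * ‖v‖ ^ 2
        - 2 * (Υ * (Lx + Ly)) * (‖u‖ * ‖v‖)) := by
    rw [ha, hb]
    nlinarith [sq_nonneg ((τ ^ 2 + μ ^ 2) * ‖u‖ - (Υ * (Lx + Ly)) * ‖v‖),
      sq_nonneg ((τ ^ 2 + ρ ^ 2) * ‖v‖ - (Υ * (Lx + Ly)) * ‖u‖)]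
  -- positivity of a
  have hapos : 0 < a := by
    rcases lt_or_ge 0 a with h | h
    · exact h
    · exfalso
      have hτ2 : τ ^ 2 = 0 := by nlinarith [sq_nonneg τ, sq_nonneg μ, sq_nonneg ρ]
      have hμ2 : μ ^ 2 = 0 := by nlinarith [sq_nonneg τ, sq_nonneg μ, sq_nonneg ρ]
      have hρ2 : ρ ^ 2 = 0 := by nlinarith [sq_nonneg τ, sq_nonneg μ, sq_nonneg ρ]
      rw [hτ2, hμ2, hρ2] at hb
      nlinarith [sq_nonneg (Υ * (Lx + Ly)), sq_nonneg Υ, sq_nonneg (Lx + Ly),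
        mul_nonneg (mul_nonneg hΥ hΥ) (mul_nonneg (by linarith : (0:ℝ) ≤ Lx + Ly) (by linarith : (0:ℝ) ≤ Lx + Ly))]
  -- positivity of x² + y²
  have hxy : 0 < ‖u‖ ^ 2 + ‖v‖ ^ 2 := by
    rcases eq_or_ne u 0 with hu | hu
    · have hv : v ≠ 0 := by
        intro hv; exact huv (by rw [hu, hv])
      have : 0 < ‖v‖ := norm_pos_iff.mpr hv
      positivity
    · have : 0 < ‖u‖ := norm_pos_iff.mpr hu
      positivity
  rw [div_le_iff₀ hapos]
  have h5 := mul_le_mul_of_nonneg_left key hapos.le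
  nlinarith [step2, h5, hxy]
end

section
/- Let E be a real Hilbert space, f : E → ℝ twice continuously differentiable, and define the Hamiltonian H(x) = (1/2)·‖∇f(x)‖². Suppose H is differentiable with L-Lipschitz gradient (L > 0) and satisfies the PL condition with constant δ > 0: (1/2)·‖∇H(x)‖² ≥ δ·H(x) for all x. Let γ ≥ 0 with γ² < δ, c > 0, and 0 < η ≤ 1/L. Let (p_t) ⊆ E and (v_t) ⊆ E be sequences with ‖v_t‖ = ‖∇f(p_t)‖ for all t (as holds for the min-max gradient v(p) = (∇ₓf, −∇_y f) on a product space), define the consensus direction ζ_t := γ·v_t + ∇H(p_t), assume ‖ζ_t‖² ≥ c·‖∇H(p_t)‖² for all t, and let p_{t+1} = p_t − η·ζ_t. Set ν := (c·δ + δ − γ²)·η − L·c·δ·η². Then ν > 0 and for every t ∈ ℕ, ‖∇f(p_t)‖² ≤ (1 − ν)^t · ‖∇f(p_0)‖². -/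
open Gradient RealInnerProductSpace

lemma line_hasDerivAt {E : Type*} [NormedAddCommGroup E] [InnerProductSpace ℝ E] [CompleteSpace E]
    (H : E → ℝ) (hdiff : ∀ x : E, DifferentiableAt ℝ H x) (x d : E) (s : ℝ) :
    HasDerivAt (fun s : ℝ => H (x + s • d)) ⟪gradient H (x + s • d), d⟫ s := by
  have hline : HasDerivAt (fun s : ℝ => x + s • d) d s := by
    simpa using ((hasDerivAt_id s).smul_const d).const_add x
  have h1 := (hdiff (x + s • d)).hasGradientAt.hasFDerivAt.comp_hasDerivAt s hline
  exact h1.congr_deriv (by simp [InnerProductSpace.toDual_apply_apply])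

lemma descent_lemma {E : Type*} [NormedAddCommGroup E] [InnerProductSpace ℝ E] [CompleteSpace E]
    (H : E → ℝ) (L : ℝ) (hL : 0 ≤ L)
    (hdiff : ∀ x : E, DifferentiableAt ℝ H x)
    (hLip : ∀ x y : E, ‖gradient H x - gradient H y‖ ≤ L * ‖x - y‖)
    (x y : E) :
    H y ≤ H x + ⟪gradient H x, y - x⟫ + L / 2 * ‖y - x‖ ^ 2 := by
  set d := y - x with hd
  set φ : ℝ → ℝ := fun s => L * ‖d‖ ^ 2 * s ^ 2 / 2 + H x + s * ⟪gradient H x, d⟫ - H (x + s • d)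
    with hφ
  have hder : ∀ s : ℝ, HasDerivAt φ
      (L * ‖d‖ ^ 2 * s + ⟪gradient H x, d⟫ - ⟪gradient H (x + s • d), d⟫) s := by
    intro s
    have h1 := line_hasDerivAt H hdiff x d s
    have h2 : HasDerivAt (fun s : ℝ => L * ‖d‖ ^ 2 * s ^ 2 / 2 + H x + s * ⟪gradient H x, d⟫)
        (L * ‖d‖ ^ 2 * s + ⟪gradient H x, d⟫) s := by
      have := (((hasDerivAt_pow 2 s).const_mul (L * ‖d‖ ^ 2)).div_const 2).add_const (H x)
      have h3 := this.add ((hasDerivAt_id s).mul_const ⟪gradient H x, d⟫)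
      refine h3.congr_deriv ?_
      ring
    exact h2.sub h1
  have hmono : MonotoneOn φ (Set.Icc (0:ℝ) 1) := by
    apply monotoneOn_of_deriv_nonneg (convex_Icc 0 1)
    · exact fun s _ => ((hder s).differentiableAt).continuousAt.continuousWithinAt
    · exact fun s _ => ((hder s).differentiableAt).differentiableWithinAt
    · intro s hs
      rw [interior_Icc] at hs
      rw [(hder s).deriv]
      have key : ⟪gradient H (x + s • d) - gradient H x, d⟫ ≤ L * ‖d‖ ^ 2 * s := by
        calc ⟪gradient H (x + s • d) - gradient H x, d⟫
            ≤ ‖gradient H (x + s • d) - gradient H x‖ * ‖d‖ := real_inner_le_norm _ _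
          _ ≤ (L * ‖x + s • d - x‖) * ‖d‖ := by
              gcongr; exact hLip _ _
          _ = L * ‖d‖ ^ 2 * s := by
              simp only [add_sub_cancel_left, norm_smul, Real.norm_eq_abs,
                abs_of_pos hs.1]
              ring
      have : ⟪gradient H (x + s • d), d⟫ - ⟪gradient H x, d⟫ ≤ L * ‖d‖ ^ 2 * s := by
        rw [← inner_sub_left]; exact key
      linarith
  have h01 := hmono (Set.mem_Icc.2 ⟨le_refl 0, zero_le_one⟩)
    (Set.mem_Icc.2 ⟨zero_le_one, le_refl 1⟩) zero_le_one
  have hφ0 : φ 0 = 0 := by simp [hφ]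
  have hφ1 : φ 1 = L * ‖d‖ ^ 2 / 2 + H x + ⟪gradient H x, d⟫ - H y := by
    simp [hφ, hd]
  rw [hφ0, hφ1] at h01
  nlinarith

theorem hamiltonian_consensus_linear_convergence
    {E : Type*} [NormedAddCommGroup E] [InnerProductSpace ℝ E] [CompleteSpace E]
    (f : E → ℝ) (hf : ContDiff ℝ 2 f)
    (H : E → ℝ) (hH : H = fun x => (1 / 2 : ℝ) * ‖gradient f x‖ ^ 2)
    (L δ : ℝ) (hL : 0 < L) (hδ : 0 < δ)
    (hdiff : ∀ x : E, DifferentiableAt ℝ H x)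
    (hLip : ∀ x y : E, ‖gradient H x - gradient H y‖ ≤ L * ‖x - y‖)
    (hPL : ∀ x : E, δ * H x ≤ (1 / 2 : ℝ) * ‖gradient H x‖ ^ 2)
    (γ : ℝ) (hγ : 0 ≤ γ) (hγδ : γ ^ 2 < δ)
    (c : ℝ) (hc : 0 < c)
    (η : ℝ) (hη : 0 < η) (hηL : η ≤ 1 / L)
    (p v : ℕ → E)
    (hv : ∀ t : ℕ, ‖v t‖ = ‖gradient f (p t)‖)
    (ζ : ℕ → E) (hζ : ∀ t : ℕ, ζ t = γ • v t + gradient H (p t))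
    (hζc : ∀ t : ℕ, c * ‖gradient H (p t)‖ ^ 2 ≤ ‖ζ t‖ ^ 2)
    (hp : ∀ t : ℕ, p (t + 1) = p t - η • ζ t)
    (ν : ℝ) (hν : ν = (c * δ + δ - γ ^ 2) * η - L * c * δ * η ^ 2) :
    0 < ν ∧ ∀ t : ℕ, ‖gradient f (p t)‖ ^ 2 ≤ (1 - ν) ^ t * ‖gradient f (p 0)‖ ^ 2 := by
  have hLη : L * η ≤ 1 := by
    have := (le_div_iff₀ hL).mp hηL; linarith
  have hνpos : 0 < ν := by
    nlinarith [mul_pos hη (sub_pos.2 hγδ),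
      mul_nonneg hη.le (mul_nonneg (mul_pos hc hδ).le (sub_nonneg.2 hLη))]
  have hHnn : ∀ x, 0 ≤ H x := by
    intro x; rw [hH]; positivity
  have key : ∀ t : ℕ, H (p (t + 1)) ≤ (1 - ν) * H (p t) := by
    intro t
    have hdes := descent_lemma H L hL.le hdiff hLip (p t) (p (t + 1))
    have hstep : p (t + 1) - p t = -(η • ζ t) := by rw [hp t]; abel
    have hin : ⟪gradient H (p t), p (t + 1) - p t⟫ = -(η * ⟪gradient H (p t), ζ t⟫) := by
      rw [hstep, inner_neg_right, real_inner_smul_right]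
    have hnrm : ‖p (t + 1) - p t‖ ^ 2 = η ^ 2 * ‖ζ t‖ ^ 2 := by
      rw [hstep, norm_neg, norm_smul, mul_pow, Real.norm_eq_abs, sq_abs]
    have hzg : ζ t - gradient H (p t) = γ • v t := by rw [hζ t]; abel
    have hvsq : ‖ζ t - gradient H (p t)‖ ^ 2 = γ ^ 2 * (2 * H (p t)) := by
      rw [hzg, norm_smul, mul_pow, Real.norm_eq_abs, sq_abs, hv t, hH]
      ring
    have hip : ⟪gradient H (p t), ζ t⟫ =
        (‖gradient H (p t)‖ ^ 2 + ‖ζ t‖ ^ 2 - γ ^ 2 * (2 * H (p t))) / 2 := by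
      have := norm_sub_sq_real (ζ t) (gradient H (p t))
      rw [hvsq] at this
      rw [real_inner_comm]
      linarith [this]
    have hPLt := hPL (p t)
    have hζct := hζc t
    have hHt := hHnn (p t)
    rw [hin, hip, hnrm] at hdes
    have hcoef : 0 ≤ η * (1 - L * η) := by nlinarith
    have hB : 2 * c * δ * H (p t) ≤ ‖ζ t‖ ^ 2 := by nlinarith
    have hprod := mul_le_mul_of_nonneg_left hB hcoef
    nlinarith [hprod]
  rcases le_or_gt 0 (1 - ν) with hle | hlt
  · have main : ∀ t : ℕ, H (p t) ≤ (1 - ν) ^ t * H (p 0) := by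
      intro t
      induction t with
      | zero => simp
      | succ n ih =>
        calc H (p (n + 1)) ≤ (1 - ν) * H (p n) := key n
          _ ≤ (1 - ν) * ((1 - ν) ^ n * H (p 0)) := by
              exact mul_le_mul_of_nonneg_left ih hle
          _ = (1 - ν) ^ (n + 1) * H (p 0) := by ring
    refine ⟨hνpos, fun t => ?_⟩
    have := main t
    rw [hH] at this
    simp only at this
    linarith
  · -- 1 - ν < 0 forces H (p t) = 0 for all t
    have hzero : ∀ t : ℕ, H (p t) = 0 := by
      intro t
      have h1 := key t
      have h2 := hHnn (p (t + 1))
      have h3 := hHnn (p t)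
      have h4 : (1 - ν) * H (p t) ≤ 0 := mul_nonpos_of_nonpos_of_nonneg hlt.le h3
      have h5 : (1 - ν) * H (p t) = 0 := le_antisymm h4 (le_trans h2 h1)
      exact (mul_eq_zero.mp h5).resolve_left hlt.ne
    refine ⟨hνpos, fun t => ?_⟩
    have h0 : ‖gradient f (p t)‖ ^ 2 = 0 := by
      have := hzero t; rw [hH] at this; simp only at this; linarith
    have h0' : ‖gradient f (p 0)‖ ^ 2 = 0 := by
      have := hzero 0; rw [hH] at this; simp only at this; linarith
    rw [h0, h0']; simp
end

section
/- Let E be a real Hilbert space, f : E → ℝ twice continuously differentiable, and define the Hamiltonian H(x) = (1/2)·‖∇f(x)‖². Suppose H is differentiable and satisfies the PL condition with constant δ > 0: (1/2)·‖∇H(x)‖² ≥ δ·H(x) for all x. Fix r₁ ∈ (0,1) and c > 0. Let (p_t) ⊆ E, directions (ξ_t) ⊆ E and positive stepsizes (η_t) satisfy p_{t+1} = p_t + η_t·ξ_t together with, for every t: (a) the Armijo condition H(p_{t+1}) − H(p_t) ≤ r₁·η_t·⟨∇H(p_t), ξ_t⟩, and (b) the sufficient-descent condition ⟨ξ_t,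 −∇H(p_t)⟩ ≥ c·‖∇H(p_t)‖². Let η̃ > 0 satisfy η̃ ≤ η_i for all i. Then for every t ∈ ℕ, ‖∇f(p_t)‖² ≤ (1 − 2·r₁·η̃·c·δ)^t · ‖∇f(p_0)‖². -/
/-!
Along the iteration, the Armijo condition, the sufficient-descent condition, the lower bound
`η̃ ≤ η t` and the PL inequality `‖∇H‖² ≥ 2δH` chain into the one-step contraction
`H (p (t+1)) ≤ (1 - 2 r₁ η̃ c δ) H (p t)`. Iterating it on the nonnegative sequence `H (p t)` gives
linear convergence of `H (p t) = ‖∇f (p t)‖² / 2`.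
-/

open scoped InnerProductSpace

theorem le_geom_of_nonneg {u : ℕ → ℝ} {c : ℝ} (hu : ∀ n, 0 ≤ u n)
    (h : ∀ n, u (n + 1) ≤ c * u n) (n : ℕ) : u n ≤ c ^ n * u 0 := by
  rcases le_or_gt 0 c with hc | hc
  · exact le_geom hc n fun k _ => h k
  · -- `c < 0` forces the sequence to vanish identically
    have hu0 : u 0 = 0 := by nlinarith [h 0, hu 0, hu 1]
    cases n with
    | zero => simp
    | succ n =>
      rw [hu0, mul_zero]
      exact (h n).trans (mul_nonpos_of_nonpos_of_nonneg hc.le (hu n))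

theorem armijo_descent_step_le_mul {E : Type*} [NormedAddCommGroup E] [InnerProductSpace ℝ E]
    {g ξ : E} {Hx Hy r η ηtilde c δ : ℝ}
    (harmijo : Hy - Hx ≤ r * η * ⟪g, ξ⟫_ℝ) (hdesc : c * ‖g‖ ^ 2 ≤ ⟪ξ, -g⟫_ℝ)
    (hPL : δ * Hx ≤ (1 / 2 : ℝ) * ‖g‖ ^ 2)
    (hr : 0 ≤ r) (hc : 0 ≤ c) (hηtilde : 0 ≤ ηtilde) (hη : ηtilde ≤ η) :
    Hy ≤ (1 - 2 * r * ηtilde * c * δ) * Hx := by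
  have hinner : ⟪g, ξ⟫_ℝ ≤ -(c * ‖g‖ ^ 2) := by
    rw [inner_neg_right, real_inner_comm] at hdesc
    linarith
  calc Hy ≤ Hx + r * η * ⟪g, ξ⟫_ℝ := by linarith
    _ ≤ Hx - r * η * (c * ‖g‖ ^ 2) := by
        nlinarith [mul_le_mul_of_nonneg_left hinner (mul_nonneg hr (hηtilde.trans hη))]
    _ ≤ Hx - r * ηtilde * c * ‖g‖ ^ 2 := by
        nlinarith [mul_le_mul_of_nonneg_right hη (mul_nonneg (mul_nonneg hr hc) (sq_nonneg ‖g‖))]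
    _ ≤ Hx - r * ηtilde * c * (2 * δ * Hx) := by
        nlinarith [mul_nonneg (mul_nonneg hr hηtilde) hc]
    _ = (1 - 2 * r * ηtilde * c * δ) * Hx := by ring

theorem hamiltonian_cg_linear_convergence_general
    {E : Type*} [NormedAddCommGroup E] [InnerProductSpace ℝ E] [CompleteSpace E]
    (f : E → ℝ)
    (H : E → ℝ) (hH : H = fun x => (1 / 2 : ℝ) * ‖gradient f x‖ ^ 2)
    (δ : ℝ)
    (hPL : ∀ x : E, δ * H x ≤ (1 / 2 : ℝ) * ‖gradient H x‖ ^ 2)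
    (r₁ : ℝ) (hr₁ : r₁ ∈ Set.Ioo (0 : ℝ) 1) (c : ℝ) (hc : 0 < c)
    (p ξ : ℕ → E) (η : ℕ → ℝ)
    (harmijo : ∀ t : ℕ, H (p (t + 1)) - H (p t) ≤ r₁ * η t * ⟪gradient H (p t), ξ t⟫_ℝ)
    (hdesc : ∀ t : ℕ, c * ‖gradient H (p t)‖ ^ 2 ≤ ⟪ξ t, -gradient H (p t)⟫_ℝ)
    (ηtilde : ℝ) (hηtilde : 0 < ηtilde) (hηmin : ∀ i : ℕ, ηtilde ≤ η i) :
    ∀ t : ℕ, ‖gradient f (p t)‖ ^ 2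
      ≤ (1 - 2 * r₁ * ηtilde * c * δ) ^ t * ‖gradient f (p 0)‖ ^ 2 := by
  intro t
  have hH_nonneg : ∀ x, 0 ≤ H x := by
    subst hH
    intro x
    positivity
  have hcontract : ∀ n, H (p (n + 1)) ≤ (1 - 2 * r₁ * ηtilde * c * δ) * H (p n) := fun n =>
    armijo_descent_step_le_mul (harmijo n) (hdesc n) (hPL (p n)) hr₁.1.le hc.le hηtilde.le
      (hηmin n)
  have hH_geom := le_geom_of_nonneg (fun n => hH_nonneg (p n)) hcontract t
  simp only [hH] at hH_geom
  linarith

theorem hamiltonian_cg_linear_convergence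
    {E : Type*} [NormedAddCommGroup E] [InnerProductSpace ℝ E] [CompleteSpace E]
    (f : E → ℝ) (hf : ContDiff ℝ 2 f)
    (H : E → ℝ) (hH : H = fun x => (1 / 2 : ℝ) * ‖gradient f x‖ ^ 2)
    (δ : ℝ) (hδ : 0 < δ)
    (hdiff : ∀ x : E, DifferentiableAt ℝ H x)
    (hPL : ∀ x : E, δ * H x ≤ (1 / 2 : ℝ) * ‖gradient H x‖ ^ 2)
    (r₁ : ℝ) (hr₁ : r₁ ∈ Set.Ioo (0 : ℝ) 1) (c : ℝ) (hc : 0 < c)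
    (p ξ : ℕ → E) (η : ℕ → ℝ) (hηpos : ∀ t : ℕ, 0 < η t)
    (hp : ∀ t : ℕ, p (t + 1) = p t + η t • ξ t)
    (harmijo : ∀ t : ℕ, H (p (t + 1)) - H (p t) ≤ r₁ * η t * ⟪gradient H (p t), ξ t⟫_ℝ)
    (hdesc : ∀ t : ℕ, c * ‖gradient H (p t)‖ ^ 2 ≤ ⟪ξ t, -gradient H (p t)⟫_ℝ)
    (ηtilde : ℝ) (hηtilde : 0 < ηtilde) (hηmin : ∀ i : ℕ, ηtilde ≤ η i) :
    ∀ t : ℕ, ‖gradient f (p t)‖ ^ 2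
      ≤ (1 - 2 * r₁ * ηtilde * c * δ) ^ t * ‖gradient f (p 0)‖ ^ 2 :=
  hamiltonian_cg_linear_convergence_general f H hH δ hPL r₁ hr₁ c hc p ξ η harmijo hdesc ηtilde
    hηtilde hηmin
end

section
/- Let d be a natural number, t ∈ ℝ, and let X₀, X₁ be positive definite real d×d matrices. Let S be the positive semidefinite square root of X₀ (so S·S = X₀, S positive definite), let M := S⁻¹ · X₁ · S⁻¹ (a positive definite, hence Hermitian, matrix), and let M^t denote the t-th real power of M defined via the Hermitian functional calculus, i.e., applying the function x ↦ x^t (real power) to the eigenvalues of M. Then log(det(S · M^t · S)) = (1 − t)·log(det X₀) + t·log(det X₁); equivalently, det(S · M^t · S) = (det X₀)^(1−t) · (det X₁)^t. -/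
theorem logdet_geodesically_linear
    (d : ℕ) (t : ℝ) (X₀ X₁ : Matrix (Fin d) (Fin d) ℝ)
    (hX₀ : X₀.PosDef) (hX₁ : X₁.PosDef)
    (S : Matrix (Fin d) (Fin d) ℝ) (hS : S.PosDef) (hSS : S * S = X₀)
    (M : Matrix (Fin d) (Fin d) ℝ) (hM : M = S⁻¹ * X₁ * S⁻¹)
    (hMherm : M.IsHermitian)
    (Mt : Matrix (Fin d) (Fin d) ℝ) (hMt : Mt = hMherm.cfc fun x : ℝ => x ^ t) :
    Real.log (S * Mt * S).det
      = (1 - t) * Real.log X₀.det + t * Real.log X₁.det := by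
  -- M is positive definite
  have hSinv : S⁻¹.PosDef := hS.inv
  have hMpd : M.PosDef := by
    refine Matrix.PosDef.of_dotProduct_mulVec_pos hMherm (fun x hx => ?_)
    have hy : S⁻¹.mulVec x ≠ 0 := by
      have hinj : Function.Injective (S⁻¹.mulVec) :=
        Matrix.mulVec_injective_iff_isUnit.mpr hSinv.isUnit
      exact (hinj.ne_iff' (Matrix.mulVec_zero _)).2 hx
    have key : dotProduct (star x) ((S⁻¹ * X₁ * S⁻¹).mulVec x)
        = dotProduct (star (S⁻¹.mulVec x)) (X₁.mulVec (S⁻¹.mulVec x)) := by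
      rw [← Matrix.mulVec_mulVec, ← Matrix.mulVec_mulVec, Matrix.dotProduct_mulVec]
      congr 1
      rw [← hS.isHermitian.inv.eq, ← Matrix.star_mulVec, hS.isHermitian.inv.eq]
    rw [hM, key]
    exact hX₁.dotProduct_mulVec_pos hy
  have hev : ∀ i, 0 < hMherm.eigenvalues i := fun i => hMpd.eigenvalues_pos i
  -- determinant of Mt
  have hdetMt : Mt.det = M.det ^ t := by
    rw [hMt]
    unfold Matrix.IsHermitian.cfc
    rw [Unitary.conjStarAlgAut_apply, Matrix.det_mul, Matrix.det_mul, Matrix.det_diagonal]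
    have hU : (hMherm.eigenvectorUnitary : Matrix (Fin d) (Fin d) ℝ).det
        * (star (hMherm.eigenvectorUnitary : Matrix (Fin d) (Fin d) ℝ)).det = 1 := by
      rw [← Matrix.det_mul, Matrix.mem_unitaryGroup_iff.mp hMherm.eigenvectorUnitary.2,
        Matrix.det_one]
    rw [mul_right_comm, mul_comm, hU, mul_one]
    rw [hMherm.det_eq_prod_eigenvalues]
    simp only [Function.comp_def, RCLike.ofReal_real_eq_id, id_eq]
    exact Real.finset_prod_rpow _ _ (fun i _ => (hev i).le) _
  have hdetS : S.det * S.det = X₀.det := by rw [← Matrix.det_mul, hSS]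
  have hSdet_pos : 0 < S.det := hS.det_pos
  have hX₀pos : (0:ℝ) < X₀.det := hX₀.det_pos
  have hX₁pos : (0:ℝ) < X₁.det := hX₁.det_pos
  have hdetM : M.det = X₁.det / X₀.det := by
    rw [hM, Matrix.det_mul, Matrix.det_mul, Matrix.det_nonsing_inv, ← hdetS]
    field_simp
    rw [Ring.inverse_eq_inv', ← mul_pow, inv_mul_cancel₀ hSdet_pos.ne', one_pow]
  have hMdetpos : 0 < M.det := by rw [hdetM]; positivity
  rw [Matrix.det_mul, Matrix.det_mul, hdetMt, hdetM]
  rw [mul_right_comm, hdetS]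
  rw [Real.log_mul hX₀pos.ne' (by positivity),
    Real.log_rpow (by positivity), Real.log_div hX₁pos.ne' hX₀pos.ne']
  ring
end

section
/- Let d ≥ 1, let c_q ≥ 0 and c_l ≥ 0 with not both zero, and for positive definite real d×d matrices X, Y define f(X, Y) = c_q·(log det X)² + c_l·(log det X)·(log det Y) − c_q·(log det Y)². Let X*, Y* be positive definite real d×d matrices. Then (X*, Y*) is a global saddle point of f — meaning f(X*, Y) ≤ f(X*, Y*) ≤ f(X, Y*) for all positive definite d×d matrices X and Y — if and only if det X* = 1 and det Y* = 1. -/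
/-!
The function `f` depends on `X` and `Y` only through `a = log det X` and `b = log det Y`, and
`log det` maps the positive definite matrices onto `ℝ`, so `(X*, Y*)` is a saddle point of `f`
exactly when `(a, b)` is a saddle point of the quadratic form
`c_q a² + c_l a b - c_q b²` on `ℝ²`. The stationarity conditions of this form are the linear
system `2 c_q a + c_l b = 0`, `c_l a - 2 c_q b = 0`, whose determinant `-(4 c_q² + c_l²)` is
nonzero; conversely `c_q ≥ 0` makes `(0, 0)` a saddle point.
-/

open Matrix

lemma eq_zero_of_forall_mul_le_mul_sq {k c : ℝ} (h : ∀ t : ℝ, t * k ≤ c * t ^ 2) :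
    k = 0 := by
  have hc : 0 < |c| + 1 := by positivity
  have key := h (k / (|c| + 1))
  have hk : k ^ 2 * (|c| + 1) ≤ |c| * k ^ 2 := by
    have hct : c * (k / (|c| + 1)) ^ 2 ≤ |c| * (k / (|c| + 1)) ^ 2 :=
      mul_le_mul_of_nonneg_right (le_abs_self c) (sq_nonneg _)
    field_simp at key hct
    nlinarith
  nlinarith [sq_nonneg k]

section SaddleForm

variable {c_q c_l : ℝ}

def saddleForm (c_q c_l a b : ℝ) : ℝ := c_q * a ^ 2 + c_l * a * b - c_q * b ^ 2

lemma stationary_of_forall_saddleForm_le {a b : ℝ}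
    (h : ∀ y, saddleForm c_q c_l a y ≤ saddleForm c_q c_l a b) :
    c_l * a - 2 * c_q * b = 0 :=
  eq_zero_of_forall_mul_le_mul_sq (c := c_q) fun t => by
    have := h (b + t)
    simp only [saddleForm] at this
    nlinarith

lemma stationary_of_forall_le_saddleForm {a b : ℝ}
    (h : ∀ x, saddleForm c_q c_l a b ≤ saddleForm c_q c_l x b) :
    2 * c_q * a + c_l * b = 0 := by
  have := eq_zero_of_forall_mul_le_mul_sq (k := -(2 * c_q * a + c_l * b)) (c := c_q) fun t => by
    have := h (a + t)
    simp only [saddleForm] at this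
    nlinarith
  linarith

lemma isSaddlePoint_saddleForm_iff (hq : 0 ≤ c_q) (hne : ¬(c_q = 0 ∧ c_l = 0)) (a b : ℝ) :
    ((∀ y, saddleForm c_q c_l a y ≤ saddleForm c_q c_l a b) ∧
      ∀ x, saddleForm c_q c_l a b ≤ saddleForm c_q c_l x b) ↔ a = 0 ∧ b = 0 := by
  constructor
  · rintro ⟨hmax, hmin⟩
    have h₁ := stationary_of_forall_saddleForm_le hmax
    have h₂ := stationary_of_forall_le_saddleForm hmin
    have hdet : 4 * c_q ^ 2 + c_l ^ 2 ≠ 0 := by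
      contrapose! hne
      constructor <;> nlinarith [sq_nonneg c_q, sq_nonneg c_l]
    constructor
    · refine (mul_eq_zero.mp (?_ : (4 * c_q ^ 2 + c_l ^ 2) * a = 0)).resolve_left hdet
      linear_combination c_l * h₁ + 2 * c_q * h₂
    · refine (mul_eq_zero.mp (?_ : (4 * c_q ^ 2 + c_l ^ 2) * b = 0)).resolve_left hdet
      linear_combination -(2 * c_q) * h₁ + c_l * h₂
  · rintro ⟨rfl, rfl⟩
    simp only [saddleForm]
    exact ⟨fun y => by nlinarith [sq_nonneg y], fun x => by nlinarith [sq_nonneg x]⟩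

end SaddleForm

section LogDet

variable {n : Type*} [Fintype n] [DecidableEq n]

lemma exists_posDef_log_det_eq [Nonempty n] (y : ℝ) :
    ∃ M : Matrix n n ℝ, M.PosDef ∧ Real.log M.det = y := by
  refine ⟨diagonal fun _ => Real.exp (y / Fintype.card n),
    posDef_diagonal_iff.mpr fun _ => Real.exp_pos _, ?_⟩
  rw [det_diagonal, Finset.prod_const, Finset.card_univ, ← Real.exp_nat_mul,
    mul_div_cancel₀ _ (Nat.cast_ne_zero.mpr Fintype.card_ne_zero), Real.log_exp]

lemma forall_posDef_log_det_iff [Nonempty n] {P : ℝ → Prop} :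
    (∀ M : Matrix n n ℝ, M.PosDef → P (Real.log M.det)) ↔ ∀ y, P y := by
  refine ⟨fun h y => ?_, fun h M _ => h _⟩
  obtain ⟨M, hM, rfl⟩ := exists_posDef_log_det_eq (n := n) y
  exact h M hM

lemma Matrix.PosDef.log_det_eq_zero_iff {A : Matrix n n ℝ} (hA : A.PosDef) :
    Real.log A.det = 0 ↔ A.det = 1 :=
  ⟨Real.eq_one_of_pos_of_log_eq_zero hA.det_pos, fun h => by rw [h, Real.log_one]⟩

end LogDet

theorem saddle_point_iff_unit_determinant_general
    (d : ℕ) (hd : 1 ≤ d) (c_q c_l : ℝ) (hq : 0 ≤ c_q)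
    (hne : ¬(c_q = 0 ∧ c_l = 0))
    (f : Matrix (Fin d) (Fin d) ℝ → Matrix (Fin d) (Fin d) ℝ → ℝ)
    (hf : ∀ X Y : Matrix (Fin d) (Fin d) ℝ,
      f X Y = c_q * Real.log X.det ^ 2 + c_l * Real.log X.det * Real.log Y.det
        - c_q * Real.log Y.det ^ 2)
    (Xstar Ystar : Matrix (Fin d) (Fin d) ℝ)
    (hXstar : Xstar.PosDef) (hYstar : Ystar.PosDef) :
    ((∀ Y : Matrix (Fin d) (Fin d) ℝ, Y.PosDef → f Xstar Y ≤ f Xstar Ystar) ∧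
     (∀ X : Matrix (Fin d) (Fin d) ℝ, X.PosDef → f Xstar Ystar ≤ f X Ystar))
      ↔ (Xstar.det = 1 ∧ Ystar.det = 1) := by
  have : Nonempty (Fin d) := ⟨⟨0, hd⟩⟩
  have hf' : f = fun X Y => saddleForm c_q c_l (Real.log X.det) (Real.log Y.det) :=
    funext₂ hf
  subst hf'
  rw [forall_posDef_log_det_iff
      (P := fun y => saddleForm c_q c_l _ y ≤ saddleForm c_q c_l _ (Real.log Ystar.det)),
    forall_posDef_log_det_iff
      (P := fun x => saddleForm c_q c_l _ (Real.log Ystar.det) ≤ saddleForm c_q c_l x _),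
    isSaddlePoint_saddleForm_iff hq hne, hXstar.log_det_eq_zero_iff, hYstar.log_det_eq_zero_iff]

theorem saddle_point_iff_unit_determinant
    (d : ℕ) (hd : 1 ≤ d) (c_q c_l : ℝ) (hq : 0 ≤ c_q) (hl : 0 ≤ c_l)
    (hne : ¬(c_q = 0 ∧ c_l = 0))
    (f : Matrix (Fin d) (Fin d) ℝ → Matrix (Fin d) (Fin d) ℝ → ℝ)
    (hf : ∀ X Y : Matrix (Fin d) (Fin d) ℝ,
      f X Y = c_q * Real.log X.det ^ 2 + c_l * Real.log X.det * Real.log Y.det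
        - c_q * Real.log Y.det ^ 2)
    (Xstar Ystar : Matrix (Fin d) (Fin d) ℝ)
    (hXstar : Xstar.PosDef) (hYstar : Ystar.PosDef) :
    ((∀ Y : Matrix (Fin d) (Fin d) ℝ, Y.PosDef → f Xstar Y ≤ f Xstar Ystar) ∧
     (∀ X : Matrix (Fin d) (Fin d) ℝ, X.PosDef → f Xstar Ystar ≤ f X Ystar))
      ↔ (Xstar.det = 1 ∧ Ystar.det = 1) :=
  saddle_point_iff_unit_determinant_general d hd c_q c_l hq hne f hf Xstar Ystar hXstar hYstar
end
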